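/- arXiv:1011.2845 — 12 statements merged into one kernel-verified Lean document; each statement's English description precedes it below -/
import Mathlib

section
/- Let S be an intra-regular Γ-AG**-groupoid and A=(μ_A,γ_A) an IFS of S. Then A is an intuitionistic fuzzy Γ-bi-ideal of S if and only if (A∘_Γδ)∘_ΓA=A and A∘_ΓA=A, where δ=(S_δ,Θ_δ) with S_δ≡1 and Θ_δ≡0. -/
open unitInterval

noncomputable instance : CompleteLattice I :=
  @Set.Icc.completeLattice ℝ _ 0 1 ⟨zero_le_one⟩

/-- The Γ-left invertive law: `(xαy)βz = (zαy)βx`.  A map `mul : S → Γ → S → S`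
satisfying it makes `S` a Γ-AG-groupoid. -/
def GammaLeftInvertive {S G : Type*} (mul : S → G → S → S) : Prop :=
  ∀ (x y z : S) (α β : G), mul (mul x α y) β z = mul (mul z α y) β x

/-- The extra law of a Γ-AG**-groupoid: `xα(yβz) = yα(xβz)`. -/
def GammaStarStar {S G : Type*} (mul : S → G → S → S) : Prop :=
  ∀ (x y z : S) (α β : G), mul x α (mul y β z) = mul y α (mul x β z)

/-- `S` is intra-regular: every `a` can be written `a = (xα(aβa))γy`. -/
def IntraRegular {S G : Type*} (mul : S → G → S → S) : Prop :=
  ∀ a : S, ∃ (x y : S) (α β γ : G), a = mul (mul x α (mul a β a)) γ y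

/-- `(μ, γ)` is an intuitionistic fuzzy set: `μ x + γ x ≤ 1`. -/
def IsIFS {S : Type*} (μ γ : S → I) : Prop :=
  ∀ x : S, (μ x : ℝ) + (γ x : ℝ) ≤ 1

/-- Membership component of the product of intuitionistic fuzzy sets:
`(f ∘_Γ g)(a) = ⊔ {f b ⊓ g c : a = bβc}` (equal to `0` if `a` has no decomposition). -/
noncomputable def gammaSupProd {S G : Type*} (mul : S → G → S → S) (f g : S → I) : S → I :=
  fun a => ⨆ (b : S) (c : S) (β : G) (_ : a = mul b β c), f b ⊓ g c

/-- Nonmembership component of the product of intuitionistic fuzzy sets: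
`(f ∘_Γ g)(a) = ⊓ {f b ⊔ g c : a = bβc}` (equal to `1` if `a` has no decomposition). -/
noncomputable def gammaInfProd {S G : Type*} (mul : S → G → S → S) (f g : S → I) : S → I :=
  fun a => ⨅ (b : S) (c : S) (β : G) (_ : a = mul b β c), f b ⊔ g c

/-- Intuitionistic fuzzy Γ-AG-subgroupoid. -/
def FuzzySubgroupoid {S G : Type*} (mul : S → G → S → S) (μ γ : S → I) : Prop :=
  ∀ (x y : S) (α : G), μ x ⊓ μ y ≤ μ (mul x α y) ∧ γ (mul x α y) ≤ γ x ⊔ γ y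

/-- Intuitionistic fuzzy Γ-left ideal. -/
def FuzzyLeftIdeal {S G : Type*} (mul : S → G → S → S) (μ γ : S → I) : Prop :=
  ∀ (x y : S) (α : G), μ y ≤ μ (mul x α y) ∧ γ (mul x α y) ≤ γ y

/-- Intuitionistic fuzzy Γ-right ideal. -/
def FuzzyRightIdeal {S G : Type*} (mul : S → G → S → S) (μ γ : S → I) : Prop :=
  ∀ (x y : S) (α : G), μ x ≤ μ (mul x α y) ∧ γ (mul x α y) ≤ γ x

/-- Intuitionistic fuzzy Γ-two-sided ideal. -/
def FuzzyTwoSidedIdeal {S G : Type*} (mul : S → G → S → S) (μ γ : S → I) : Prop :=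
  FuzzyLeftIdeal mul μ γ ∧ FuzzyRightIdeal mul μ γ

/-- Intuitionistic fuzzy Γ-generalized bi-ideal. -/
def FuzzyGenBiIdeal {S G : Type*} (mul : S → G → S → S) (μ γ : S → I) : Prop :=
  ∀ (x a y : S) (β δ : G),
    μ x ⊓ μ y ≤ μ (mul (mul x β a) δ y) ∧ γ (mul (mul x β a) δ y) ≤ γ x ⊔ γ y

/-- Intuitionistic fuzzy Γ-bi-ideal. -/
def FuzzyBiIdeal {S G : Type*} (mul : S → G → S → S) (μ γ : S → I) : Prop :=
  FuzzySubgroupoid mul μ γ ∧ FuzzyGenBiIdeal mul μ γ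

/-- Intuitionistic fuzzy Γ-interior ideal. -/
def FuzzyInteriorIdeal {S G : Type*} (mul : S → G → S → S) (μ γ : S → I) : Prop :=
  ∀ (x a y : S) (β δ : G),
    μ a ≤ μ (mul (mul x β a) δ y) ∧ γ (mul (mul x β a) δ y) ≤ γ a

/-- Intuitionistic fuzzy Γ-quasi ideal: `(A ∘ δ) ∩ (δ ∘ A) ⊆ A` where
`δ = (1, 0)` is the whole-set IFS. -/
def FuzzyQuasiIdeal {S G : Type*} (mul : S → G → S → S) (μ γ : S → I) : Prop :=
  (∀ a : S, gammaSupProd mul μ (fun _ => 1) a ⊓ gammaSupProd mul (fun _ => 1) μ a ≤ μ a) ∧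
  (∀ a : S, γ a ≤ gammaInfProd mul γ (fun _ => 0) a ⊔ gammaInfProd mul (fun _ => 0) γ a)

/-- The intuitionistic Γ-level cut `A_α = {x : μ x ≥ α and γ x ≤ α}`. -/
def levelCut {S : Type*} (μ γ : S → I) (α : ℝ) : Set S :=
  {x : S | α ≤ (μ x : ℝ) ∧ (γ x : ℝ) ≤ α}

/-- Helper: in the linear order I, inf with m passes under an iSup. -/
lemma iSup_inf_le_of_forall {ι : Sort*} {f : ι → I} {m c : I}
    (h : ∀ i, f i ⊓ m ≤ c) : (⨆ i, f i) ⊓ m ≤ c := by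
  by_contra hc
  rw [not_le] at hc
  have h1 : c < ⨆ i, f i := hc.trans_le inf_le_left
  have h2 : c < m := hc.trans_le inf_le_right
  obtain ⟨i, hi⟩ : ∃ i, c < f i := by
    by_contra h3
    push_neg at h3
    exact absurd (iSup_le h3) h1.not_ge
  exact ((lt_inf_iff.mpr ⟨hi, h2⟩).trans_le (h i)).false

/-- Helper: in the linear order I, sup with m passes under an iInf. -/
lemma le_iInf_sup_of_forall {ι : Sort*} {f : ι → I} {m c : I}
    (h : ∀ i, c ≤ f i ⊔ m) : c ≤ (⨅ i, f i) ⊔ m := by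
  by_contra hc
  rw [not_le] at hc
  have h1 : (⨅ i, f i) < c := le_sup_left.trans_lt hc
  have h2 : m < c := le_sup_right.trans_lt hc
  obtain ⟨i, hi⟩ : ∃ i, f i < c := by
    by_contra h3
    push_neg at h3
    exact absurd (le_iInf h3) h1.not_ge
  exact ((h i).trans_lt (sup_lt_iff.mpr ⟨hi, h2⟩)).false

/-- In an intra-regular Γ-AG**-groupoid, every element `a` satisfies
`a = (a p t) q a` for some `t, p, q`. -/
lemma intra_aux1 {S G : Type*} (mul : S → G → S → S) (hinv : GammaLeftInvertive mul)
    (hss : GammaStarStar mul) (hir : IntraRegular mul) (a : S) :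
    ∃ (t : S) (p q : G), a = mul (mul a p t) q a := by
  obtain ⟨x, y, α, β, γ, ha⟩ := hir a
  exact ⟨mul x β (mul (mul a α (mul x β y)) γ y), α, γ,
    (ha.trans ((hinv x (mul a β a) y α γ).trans ((congrArg (fun w => mul w γ x) (hss y a a α β)).trans ((congrArg (fun w => mul w γ x) (congrArg (mul a α) (congrArg (mul y β) ha))).trans ((congrArg (fun w => mul w γ x) (congrArg (mul a α) (congrArg (mul y β) (congrArg (fun w => mul w γ y) (hss x a a α β))))).trans ((congrArg (fun w => mul w γ x) (congrArg (mul a α) (congrArg (mul y β) (hinv a (mul x β a) y α γ)))).trans ((congrArg (fun w => mul w γ x) (congrArg (mul a α) (hss y (mul y α (mul x β a)) a β γ))).trans ((congrArg (fun w => mul w γ x) (congrArg (mul a α) (hinv y (mul x β a) (mul y γ a) α β))).trans ((congrArg (fun w => mul w γ x) (congrArg (mul a α) (congrArg (fun w => mul w β y) (hss (mul y γ a) x a α β)))).trans ((congrArg (fun w => mul w γ x) (congrArg (mul a α) (congrArg (fun w => mul w β y) (congrArg (mul x α) (hinv y a a γ β))))).trans ((congrArg (fun w => mul w γ x) (congrArg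 (mul a α) (congrArg (fun w => mul w β y) (hss x (mul a γ a) y α β)))).trans ((congrArg (fun w => mul w γ x) (congrArg (mul a α) (hinv (mul a γ a) (mul x β y) y α β))).trans ((congrArg (fun w => mul w γ x) (congrArg (mul a α) (hss (mul y α (mul x β y)) a a β γ))).trans ((congrArg (fun w => mul w γ x) (congrArg (mul a α) (congrArg (mul a β) (hinv y (mul x β y) a α γ)))).trans ((hinv a (mul a β (mul (mul a α (mul x β y)) γ y)) x α γ).trans (congrArg (fun w => mul w γ a) (hss x a (mul (mul a α (mul x β y)) γ y) α β)))))))))))))))))⟩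

/-- In an intra-regular Γ-AG**-groupoid, every element `a` satisfies
`a = a q ((a p u) p a)` for some `u, p, q`. -/
lemma intra_aux2 {S G : Type*} (mul : S → G → S → S) (hinv : GammaLeftInvertive mul)
    (hss : GammaStarStar mul) (hir : IntraRegular mul) (a : S) :
    ∃ (u : S) (p q : G), a = mul a q (mul (mul a p u) p a) := by
  obtain ⟨x, y, α, β, γ, ha⟩ := hir a
  exact ⟨mul y β (mul (mul x β x) γ y), α, γ,
    (ha.trans ((congrArg (fun w => mul w γ y) (hss x a a α β)).trans ((congrArg (fun w => mul w γ y) (congrArg (mul a α) (congrArg (mul x β) ha))).trans ((congrArg (fun w => mul w γ y) (congrArg (mul a α) (congrArg (mul x β) (hinv x (mul a β a) y α γ)))).trans ((congrArg (fun w => mul w γ y) (congrArg (mul a α) (hss x (mul y α (mul a β a)) x β γ))).trans ((congrArg (fun w => mul w γ y) (congrArg (mul a α) (hinv y (mul a β a) (mul x γ x) α β))).trans ((congrArg (fun w => mul w γ y) (congrArg (mul a α) (congrArg (fun w => mul w β y) (hinv x x (mul a β a) γ α)))).trans ((congrArg (fun w => mul w γ y) (congrArg (mul a α) (hinv (mul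 (mul a β a) γ x) x y α β))).trans ((congrArg (fun w => mul w γ y) (congrArg (mul a α) (congrArg (mul (mul y α x) β) (hinv a a x β γ)))).trans ((congrArg (fun w => mul w γ y) (congrArg (mul a α) (hss (mul y α x) (mul x β a) a β γ))).trans ((congrArg (fun w => mul w γ y) (congrArg (mul a α) (congrArg (mul (mul x β a) β) (hinv y x a α γ)))).trans ((congrArg (fun w => mul w γ y) (congrArg (mul a α) (hss (mul x β a) (mul a α x) y β γ))).trans ((congrArg (fun w => mul w γ y) (congrArg (mul a α) (congrArg (mul (mul a α x) β) (hinv x a y β γ)))).trans ((congrArg (fun w => mul w γ y) (congrArg (mul a α) (hss (mul a α x) (mul y β a) x β γ))).trans ((congrArg (fun w => mul w γ y) (congrArg (mul a α) (hinv y a (mul (mul a α x) γ x) β β))).trans ((congrArg (fun w => mul w γ y) (congrArg (mul a α) (congrArg (fun w => mul w β y) (hinv (mul a α x) x a γ β)))).trans ((congrArg (fun w => mul w γ y) (congrArg (mul a α) (congrArg (fun w => mul w β y) (hss (mul a γ x) a x β α)))).trans ((congrArg (fun w => mul w γ y) (congrArg (mul a α) (congrArg (fun w => mul w β y) (congrArg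 (mul a β) (hinv a x x γ α))))).trans ((congrArg (fun w => mul w γ y) (congrArg (mul a α) (congrArg (fun w => mul w β y) (hss a (mul x γ x) a β α)))).trans ((congrArg (fun w => mul w γ y) (congrArg (mul a α) (congrArg (fun w => mul w β y) (hinv x x (mul a α a) γ β)))).trans ((congrArg (fun w => mul w γ y) (congrArg (mul a α) (hinv (mul (mul a α a) γ x) x y β β))).trans ((congrArg (fun w => mul w γ y) (congrArg (mul a α) (hss (mul y β x) (mul a α a) x β γ))).trans ((congrArg (fun w => mul w γ y) (congrArg (mul a α) (congrArg (mul (mul a α a) β) (hinv y x x β γ)))).trans ((congrArg (fun w => mul w γ y) (hss a (mul a α a) (mul (mul x β x) γ y) α β)).trans ((hinv (mul a α a) (mul a β (mul (mul x β x) γ y)) y α γ).trans ((hss (mul y α (mul a β (mul (mul x β x) γ y))) a a γ α).trans (congrArg (mul a γ) (congrArg (fun w => mul w α a) (hss y a (mul (mul x β x) γ y) α β)))))))))))))))))))))))))))))⟩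

theorem fuzzy_bi_ideal_iff_products {S G : Type*} [Nonempty S] [Nonempty G]
    (mul : S → G → S → S) (hinv : GammaLeftInvertive mul)
    (hss : GammaStarStar mul) (hir : IntraRegular mul)
    (μ γ : S → I) (hIFS : IsIFS μ γ) :
    FuzzyBiIdeal mul μ γ ↔
      (gammaSupProd mul (gammaSupProd mul μ (fun _ => 1)) μ = μ ∧
       gammaInfProd mul (gammaInfProd mul γ (fun _ => 0)) γ = γ ∧
       gammaSupProd mul μ μ = μ ∧
       gammaInfProd mul γ γ = γ) := by
  constructor
  · rintro ⟨hsub, hgen⟩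
    refine ⟨?_, ?_, ?_, ?_⟩
    · funext a
      simp only [gammaSupProd]
      refine le_antisymm ?_ ?_
      · refine iSup_le fun b => iSup_le fun c => iSup_le fun β1 => iSup_le fun hab => ?_
        subst hab
        refine iSup_inf_le_of_forall fun d => iSup_inf_le_of_forall fun e =>
          iSup_inf_le_of_forall fun δ2 => iSup_inf_le_of_forall fun hb => ?_
        subst hb
        exact le_trans (inf_le_inf_right _ inf_le_left) (hgen d e c δ2 β1).1
      · obtain ⟨t, p, q, hat⟩ := intra_aux1 mul hinv hss hir a
        refine le_iSup_of_le (mul a p t) (le_iSup_of_le a (le_iSup_of_le q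
          (le_iSup_of_le hat ?_)))
        exact le_inf (le_iSup_of_le a (le_iSup_of_le t (le_iSup_of_le p
          (le_iSup_of_le rfl (le_inf le_rfl le_one'))))) le_rfl
    · funext a
      simp only [gammaInfProd]
      refine le_antisymm ?_ ?_
      · obtain ⟨t, p, q, hat⟩ := intra_aux1 mul hinv hss hir a
        refine iInf_le_of_le (mul a p t) (iInf_le_of_le a (iInf_le_of_le q
          (iInf_le_of_le hat ?_)))
        refine sup_le ?_ le_rfl
        exact iInf_le_of_le a (iInf_le_of_le t (iInf_le_of_le p
          (iInf_le_of_le rfl (sup_le le_rfl nonneg'))))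
      · refine le_iInf fun b => le_iInf fun c => le_iInf fun β1 => le_iInf fun hab => ?_
        subst hab
        refine le_iInf_sup_of_forall fun d => le_iInf_sup_of_forall fun e =>
          le_iInf_sup_of_forall fun δ2 => le_iInf_sup_of_forall fun hb => ?_
        subst hb
        exact le_trans (hgen d e c δ2 β1).2 (sup_le_sup_right le_sup_left _)
    · funext a
      simp only [gammaSupProd]
      refine le_antisymm ?_ ?_
      · refine iSup_le fun b => iSup_le fun c => iSup_le fun β1 => iSup_le fun hab => ?_
        subst hab
        exact (hsub b c β1).1
      · obtain ⟨u, p, q, hau⟩ := intra_aux2 mul hinv hss hir a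
        refine le_iSup_of_le a (le_iSup_of_le (mul (mul a p u) p a) (le_iSup_of_le q
          (le_iSup_of_le hau ?_)))
        exact le_inf le_rfl (le_trans (le_inf le_rfl le_rfl) (hgen a u a p p).1)
    · funext a
      simp only [gammaInfProd]
      refine le_antisymm ?_ ?_
      · obtain ⟨u, p, q, hau⟩ := intra_aux2 mul hinv hss hir a
        refine iInf_le_of_le a (iInf_le_of_le (mul (mul a p u) p a) (iInf_le_of_le q
          (iInf_le_of_le hau ?_)))
        exact sup_le le_rfl (le_trans (hgen a u a p p).2 (sup_le le_rfl le_rfl))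
      · refine le_iInf fun b => le_iInf fun c => le_iInf fun β1 => le_iInf fun hab => ?_
        subst hab
        exact (hsub b c β1).2
  · rintro ⟨h1, h2, h3, h4⟩
    constructor
    · intro x y α
      constructor
      · rw [← congrFun h3 (mul x α y)]
        simp only [gammaSupProd]
        exact le_iSup_of_le x (le_iSup_of_le y (le_iSup_of_le α (le_iSup_of_le rfl le_rfl)))
      · rw [← congrFun h4 (mul x α y)]
        simp only [gammaInfProd]
        exact iInf_le_of_le x (iInf_le_of_le y (iInf_le_of_le α (iInf_le_of_le rfl le_rfl)))
    · intro x a y β δ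
      constructor
      · rw [← congrFun h1 (mul (mul x β a) δ y)]
        simp only [gammaSupProd]
        refine le_iSup_of_le (mul x β a) (le_iSup_of_le y (le_iSup_of_le δ
          (le_iSup_of_le rfl ?_)))
        refine le_inf (le_trans inf_le_left ?_) inf_le_right
        exact le_iSup_of_le x (le_iSup_of_le a (le_iSup_of_le β
          (le_iSup_of_le rfl (le_inf le_rfl le_one'))))
      · rw [← congrFun h2 (mul (mul x β a) δ y)]
        simp only [gammaInfProd]
        refine iInf_le_of_le (mul x β a) (iInf_le_of_le y (iInf_le_of_le δ
          (iInf_le_of_le rfl ?_)))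
        refine sup_le (le_trans ?_ le_sup_left) le_sup_right
        exact iInf_le_of_le x (iInf_le_of_le a (iInf_le_of_le β
          (iInf_le_of_le rfl (sup_le le_rfl nonneg'))))
end

section
/- Let S be an intra-regular Γ-AG**-groupoid and A=(μ_A,γ_A) an IFS of S. Then A is an intuitionistic fuzzy Γ-interior ideal of S if and only if (δ∘_ΓA)∘_Γδ=A, where δ=(S_δ,Θ_δ) with S_δ≡1 and Θ_δ≡0. -/
open unitInterval

theorem fuzzy_interior_ideal_iff_products {S G : Type*} [Nonempty S] [Nonempty G]
    (mul : S → G → S → S) (hinv : GammaLeftInvertive mul)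
    (hss : GammaStarStar mul) (hir : IntraRegular mul)
    (μ γ : S → I) (hIFS : IsIFS μ γ) :
    FuzzyInteriorIdeal mul μ γ ↔
      (gammaSupProd mul (gammaSupProd mul (fun _ => 1) μ) (fun _ => 1) = μ ∧
       gammaInfProd mul (gammaInfProd mul (fun _ => 0) γ) (fun _ => 0) = γ) := by
  have key : ∀ a : S, ∃ (u c : S) (δ ε : G), a = mul (mul u δ a) ε c := by
    intro a
    obtain ⟨x, y, α, β, γ', ha⟩ := hir a
    refine ⟨mul (mul x β (mul x α (mul a β a))) γ' y, y, α, γ', ?_⟩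
    calc a = mul (mul x α (mul a β a)) γ' y := ha
      _ = mul (mul x α (mul (mul (mul x α (mul a β a)) γ' y) β a)) γ' y := by
          rw [← ha]; exact ha
      _ = mul (mul x α (mul (mul a γ' y) β (mul x α (mul a β a)))) γ' y := by
          rw [hinv (mul x α (mul a β a)) y a γ' β]
      _ = mul (mul (mul a γ' y) α (mul x β (mul x α (mul a β a)))) γ' y := by
          rw [hss x (mul a γ' y) (mul x α (mul a β a)) α β]
      _ = mul (mul (mul (mul x β (mul x α (mul a β a))) γ' y) α a) γ' y := by
          rw [hinv a y (mul x β (mul x α (mul a β a))) γ' α]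
  constructor
  · intro hI
    constructor
    · funext a
      obtain ⟨u, c, δ, ε, hk⟩ := key a
      apply le_antisymm
      · refine iSup_le fun b => iSup_le fun c' => iSup_le fun β' => iSup_le fun h => ?_
        refine le_trans inf_le_left ?_
        refine iSup_le fun p => iSup_le fun v => iSup_le fun δ' => iSup_le fun h2 => ?_
        refine le_trans inf_le_right ?_
        have := (hI p v c' δ' β').1
        rw [h, h2]
        exact this
      · refine le_iSup_of_le (mul u δ a) (le_iSup_of_le c (le_iSup_of_le ε
          (le_iSup_of_le hk (le_inf ?_ le_one'))))
        exact le_iSup_of_le u (le_iSup_of_le a (le_iSup_of_le δ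
          (le_iSup_of_le rfl (le_inf le_one' le_rfl))))
    · funext a
      obtain ⟨u, c, δ, ε, hk⟩ := key a
      apply le_antisymm
      · refine iInf_le_of_le (mul u δ a) (iInf_le_of_le c (iInf_le_of_le ε
          (iInf_le_of_le hk (sup_le ?_ nonneg'))))
        exact iInf_le_of_le u (iInf_le_of_le a (iInf_le_of_le δ
          (iInf_le_of_le rfl (sup_le nonneg' le_rfl))))
      · refine le_iInf fun b => le_iInf fun c' => le_iInf fun β' => le_iInf fun h => ?_
        refine le_trans ?_ le_sup_left
        refine le_iInf fun p => le_iInf fun v => le_iInf fun δ' => le_iInf fun h2 => ?_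
        refine le_trans ?_ le_sup_right
        have := (hI p v c' δ' β').2
        rw [h, h2]
        exact this
  · rintro ⟨hμ, hγ⟩ x a y β δ
    constructor
    · conv_rhs => rw [← hμ]
      refine le_iSup_of_le (mul x β a) (le_iSup_of_le y (le_iSup_of_le δ
        (le_iSup_of_le rfl (le_inf ?_ le_one'))))
      exact le_iSup_of_le x (le_iSup_of_le a (le_iSup_of_le β
        (le_iSup_of_le rfl (le_inf le_one' le_rfl))))
    · conv_lhs => rw [← hγ]
      refine iInf_le_of_le (mul x β a) (iInf_le_of_le y (iInf_le_of_le δ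
        (iInf_le_of_le rfl (sup_le ?_ nonneg'))))
      exact iInf_le_of_le x (iInf_le_of_le a (iInf_le_of_le β
        (iInf_le_of_le rfl (sup_le nonneg' le_rfl))))
end

section
/- Let S be an intra-regular Γ-AG**-groupoid and A=(μ_A,γ_A) an IFS of S. Then A is an intuitionistic fuzzy Γ-left ideal of S if and only if A is an intuitionistic fuzzy Γ-right ideal of S. -/
open unitInterval

theorem fuzzy_left_iff_right_ideal {S G : Type*} [Nonempty S] [Nonempty G]
    (mul : S → G → S → S) (hinv : GammaLeftInvertive mul)
    (hss : GammaStarStar mul) (hir : IntraRegular mul)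
    (μ γ : S → I) (hIFS : IsIFS μ γ) :
    FuzzyLeftIdeal mul μ γ ↔ FuzzyRightIdeal mul μ γ := by
  constructor
  · intro hL x y α
    obtain ⟨u, v, α', β', γ', hx⟩ := hir x
    have key : mul x α y = mul x α (mul u α' (mul (mul y γ' v) β' x)) := by
      calc mul x α y = mul (mul (mul u α' (mul x β' x)) γ' v) α y := by rw [← hx]
        _ = mul (mul y γ' v) α (mul u α' (mul x β' x)) := hinv _ _ _ _ _
        _ = mul u α (mul (mul y γ' v) α' (mul x β' x)) := hss _ _ _ _ _
        _ = mul u α (mul x α' (mul (mul y γ' v) β' x)) := by rw [hss (mul y γ' v) x]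
        _ = mul x α (mul u α' (mul (mul y γ' v) β' x)) := hss _ _ _ _ _
    rw [key]
    constructor
    · exact le_trans (le_trans (hL _ x _).1 (hL u _ α').1) (hL x _ α).1
    · exact le_trans (hL x _ α).2 (le_trans (hL u _ α').2 (hL _ x _).2)
  · intro hR x y α
    obtain ⟨u, v, α', β', γ', hy⟩ := hir y
    have key : mul x α y = mul (mul y α' (mul u β' y)) α (mul x γ' v) := by
      calc mul x α y = mul x α (mul (mul u α' (mul y β' y)) γ' v) := by rw [← hy]
        _ = mul (mul u α' (mul y β' y)) α (mul x γ' v) := hss _ _ _ _ _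
        _ = mul (mul y α' (mul u β' y)) α (mul x γ' v) := by rw [hss u y]
    rw [key]
    constructor
    · exact le_trans (hR y _ α').1 (hR _ _ α).1
    · exact le_trans (hR _ _ α).2 (hR y _ α').2
end

section
/- Every intra-regular Γ-AG**-groupoid S is an intuitionistic fuzzy Γ-duo, i.e., every intuitionistic fuzzy Γ-left ideal of S is an intuitionistic fuzzy Γ-two-sided ideal of S and every intuitionistic fuzzy Γ-right ideal of S is an intuitionistic fuzzy Γ-two-sided ideal of S. -/
open unitInterval

theorem intra_regular_is_fuzzy_duo {S G : Type*} [Nonempty S] [Nonempty G]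
    (mul : S → G → S → S) (hinv : GammaLeftInvertive mul)
    (hss : GammaStarStar mul) (hir : IntraRegular mul) :
    (∀ μ γ : S → I, IsIFS μ γ → FuzzyLeftIdeal mul μ γ → FuzzyTwoSidedIdeal mul μ γ) ∧
    (∀ μ γ : S → I, IsIFS μ γ → FuzzyRightIdeal mul μ γ → FuzzyTwoSidedIdeal mul μ γ) := by
  constructor
  · intro μ γ _ hL
    refine ⟨hL, ?_⟩
    intro x y α
    obtain ⟨u, v, a', b', c', hx⟩ := hir x
    have key : mul x α y = mul u α (mul (mul y c' v) a' (mul x b' x)) := by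
      calc mul x α y = mul (mul (mul u a' (mul x b' x)) c' v) α y := by rw [← hx]
        _ = mul (mul y c' v) α (mul u a' (mul x b' x)) := hinv _ _ _ _ _
        _ = mul u α (mul (mul y c' v) a' (mul x b' x)) := hss _ _ _ _ _
    constructor
    · rw [key]
      calc μ x ≤ μ (mul x b' x) := (hL x x b').1
        _ ≤ μ (mul (mul y c' v) a' (mul x b' x)) := (hL _ _ _).1
        _ ≤ μ (mul u α (mul (mul y c' v) a' (mul x b' x))) := (hL _ _ _).1
    · rw [key]
      calc γ (mul u α (mul (mul y c' v) a' (mul x b' x)))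
            ≤ γ (mul (mul y c' v) a' (mul x b' x)) := (hL _ _ _).2
        _ ≤ γ (mul x b' x) := (hL _ _ _).2
        _ ≤ γ x := (hL x x b').2
  · intro μ γ _ hR
    refine ⟨?_, hR⟩
    intro x y α
    obtain ⟨u, v, a', b', c', hy⟩ := hir y
    have key : mul x α y = mul (mul y a' (mul u b' y)) α (mul x c' v) := by
      calc mul x α y = mul x α (mul (mul u a' (mul y b' y)) c' v) := by rw [← hy]
        _ = mul x α (mul (mul y a' (mul u b' y)) c' v) := by rw [hss u y y a' b']
        _ = mul (mul y a' (mul u b' y)) α (mul x c' v) := hss _ _ _ _ _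
    constructor
    · rw [key]
      calc μ y ≤ μ (mul y a' (mul u b' y)) := (hR _ _ _).1
        _ ≤ μ (mul (mul y a' (mul u b' y)) α (mul x c' v)) := (hR _ _ _).1
    · rw [key]
      calc γ (mul (mul y a' (mul u b' y)) α (mul x c' v))
            ≤ γ (mul y a' (mul u b' y)) := (hR _ _ _).2
        _ ≤ γ y := (hR y _ a').2
end

section
/- Let S be an intra-regular Γ-AG**-groupoid and A=(μ_A,γ_A) any IFS of S. Then A⊆δ∘_ΓA and A⊆A∘_Γδ, i.e., (S_δ∘_Γμ_A)(a)≥μ_A(a), (μ_A∘_ΓS_δ)(a)≥μ_A(a), (Θ_δ∘_Γγ_A)(a)≤γ_A(a) and (γ_A∘_ΓΘ_δ)(a)≤γ_A(a) for every a∈S, where δ=(S_δ,Θ_δ) with S_δ≡1 and Θ_δ≡0. -/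
open unitInterval

theorem subset_delta_prods {S G : Type*} [Nonempty S] [Nonempty G]
    (mul : S → G → S → S) (hinv : GammaLeftInvertive mul)
    (hss : GammaStarStar mul) (hir : IntraRegular mul)
    (μ γ : S → I) (hIFS : IsIFS μ γ) :
    ∀ a : S,
      μ a ≤ gammaSupProd mul (fun _ => 1) μ a ∧
      μ a ≤ gammaSupProd mul μ (fun _ => 1) a ∧
      gammaInfProd mul (fun _ => 0) γ a ≤ γ a ∧
      gammaInfProd mul γ (fun _ => 0) a ≤ γ a := by
  intro a
  obtain ⟨x, y, α, β, g, ha⟩ := hir a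
  -- decomposition a = (yα(xβa)) g a
  have h1 : a = mul (mul y α (mul x β a)) g a := by
    conv_lhs => rw [ha]
    rw [hss x a a α β, hinv a (mul x β a) y α g]
  -- decomposition a = a g t
  have e1 : mul a β a = mul (mul a g y) β (mul x α (mul a β a)) := by
    have := hinv (mul x α (mul a β a)) y a g β
    rwa [← ha] at this
  have h2 : a = mul a g (mul (mul y α (mul x β (mul x α (mul a β a)))) g y) := by
    calc a = mul (mul x α (mul a β a)) g y := ha
      _ = mul (mul x α (mul (mul a g y) β (mul x α (mul a β a)))) g y :=
          congrArg (fun z => mul (mul x α z) g y) e1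
      _ = mul (mul (mul a g y) α (mul x β (mul x α (mul a β a)))) g y := by
          rw [hss x (mul a g y) (mul x α (mul a β a)) α β]
      _ = mul (mul y α (mul x β (mul x α (mul a β a)))) g (mul a g y) :=
          hinv (mul a g y) (mul x β (mul x α (mul a β a))) y α g
      _ = mul a g (mul (mul y α (mul x β (mul x α (mul a β a)))) g y) :=
          hss (mul y α (mul x β (mul x α (mul a β a)))) a y g g
  have hμ1 : μ a ≤ (1 : I) ⊓ μ a := le_inf le_top le_rfl
  have hμ2 : μ a ≤ μ a ⊓ (1 : I) := le_inf le_rfl le_top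
  have hγ1 : (0 : I) ⊔ γ a ≤ γ a := sup_le bot_le le_rfl
  have hγ2 : γ a ⊔ (0 : I) ≤ γ a := sup_le le_rfl bot_le
  refine ⟨?_, ?_, ?_, ?_⟩
  · exact le_trans hμ1 (le_iSup_of_le (mul y α (mul x β a)) (le_iSup_of_le a
      (le_iSup_of_le g (le_iSup_of_le h1 le_rfl))))
  · exact le_trans hμ2 (le_iSup_of_le a (le_iSup_of_le
      (mul (mul y α (mul x β (mul x α (mul a β a)))) g y)
      (le_iSup_of_le g (le_iSup_of_le h2 le_rfl))))
  · exact le_trans (iInf_le_of_le (mul y α (mul x β a)) (iInf_le_of_le a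
      (iInf_le_of_le g (iInf_le_of_le h1 le_rfl)))) hγ1
  · exact le_trans (iInf_le_of_le a (iInf_le_of_le
      (mul (mul y α (mul x β (mul x α (mul a β a)))) g y)
      (iInf_le_of_le g (iInf_le_of_le h2 le_rfl)))) hγ2
end

section
/- Let S be an intra-regular Γ-AG**-groupoid and A=(μ_A,γ_A) an intuitionistic fuzzy Γ-two-sided ideal of S. Then δ∘_ΓA=A and A∘_Γδ=A, where δ=(S_δ,Θ_δ) with S_δ≡1 and Θ_δ≡0. -/
open unitInterval

theorem delta_prod_of_two_sided_ideal {S G : Type*} [Nonempty S] [Nonempty G]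
    (mul : S → G → S → S) (hinv : GammaLeftInvertive mul)
    (hss : GammaStarStar mul) (hir : IntraRegular mul)
    (μ γ : S → I) (hIFS : IsIFS μ γ) (hI : FuzzyTwoSidedIdeal mul μ γ) :
    (gammaSupProd mul (fun _ => 1) μ = μ ∧ gammaInfProd mul (fun _ => 0) γ = γ) ∧
    (gammaSupProd mul μ (fun _ => 1) = μ ∧ gammaInfProd mul γ (fun _ => 0) = γ) := by

  have hone : ∀ t : I, t ≤ 1 := fun t => Subtype.coe_le_coe.mp (by simpa using t.2.2)
  have hzero : ∀ t : I, (0:I) ≤ t := fun t => Subtype.coe_le_coe.mp (by simpa using t.2.1)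
  -- decompositions
  have decompL : ∀ a : S, ∃ (b : S) (δ' : G), a = mul b δ' a := by
    intro a
    obtain ⟨x, y, α, β, γ', h⟩ := hir a
    have h1 : a = mul (mul a α (mul x β a)) γ' y := h.trans (congrArg (fun t => mul t γ' y) (hss x a a α β))
    exact ⟨mul y α (mul x β a), γ', h1.trans (hinv a (mul x β a) y α γ')⟩
  have decompR : ∀ a : S, ∃ (b c : S) (δ' : G), a = mul (mul a δ' b) δ' c ∨ True := by
    intro a; exact ⟨a, a, Classical.arbitrary G, Or.inr trivial⟩
  clear decompR
  have decompR : ∀ a : S, ∃ (b c : S) (δ' : G), a = mul b δ' c ∧ μ a ≤ μ b ∧ γ b ≤ γ a := by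
    intro a
    obtain ⟨x, y, α, β, γ', h⟩ := hir a
    have h1 : a = mul (mul a α (mul x β a)) γ' y := h.trans (congrArg (fun t => mul t γ' y) (hss x a a α β))
    exact ⟨mul a α (mul x β a), y, γ', h1, (hI.2 a (mul x β a) α).1, (hI.2 a (mul x β a) α).2⟩
  refine ⟨⟨funext fun a => ?_, funext fun a => ?_⟩, ⟨funext fun a => ?_, funext fun a => ?_⟩⟩
  · -- gammaSupProd 1 μ = μ
    refine le_antisymm ?_ ?_
    · refine iSup_le fun b => iSup_le fun c => iSup_le fun β' => iSup_le fun h => ?_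
      calc (1:I) ⊓ μ c ≤ μ c := inf_le_right
        _ ≤ μ (mul b β' c) := (hI.1 b c β').1
        _ = μ a := by rw [← h]
    · obtain ⟨b, δ', h⟩ := decompL a
      refine le_iSup_of_le b (le_iSup_of_le a (le_iSup_of_le δ' (le_iSup_of_le h ?_)))
      exact le_inf (hone _) le_rfl
  · -- gammaInfProd 0 γ = γ
    refine le_antisymm ?_ ?_
    · obtain ⟨b, δ', h⟩ := decompL a
      refine iInf_le_of_le b (iInf_le_of_le a (iInf_le_of_le δ' (iInf_le_of_le h ?_)))
      exact sup_le (hzero _) le_rfl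
    · refine le_iInf fun b => le_iInf fun c => le_iInf fun β' => le_iInf fun h => ?_
      calc γ a = γ (mul b β' c) := by rw [← h]
        _ ≤ γ c := (hI.1 b c β').2
        _ ≤ (0:I) ⊔ γ c := le_sup_right
  · -- gammaSupProd μ 1 = μ
    refine le_antisymm ?_ ?_
    · refine iSup_le fun b => iSup_le fun c => iSup_le fun β' => iSup_le fun h => ?_
      calc μ b ⊓ (1:I) ≤ μ b := inf_le_left
        _ ≤ μ (mul b β' c) := (hI.2 b c β').1
        _ = μ a := by rw [← h]
    · obtain ⟨b, c, δ', h, hm, _⟩ := decompR a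
      refine le_iSup_of_le b (le_iSup_of_le c (le_iSup_of_le δ' (le_iSup_of_le h ?_)))
      exact le_inf hm (hone _)
  · -- gammaInfProd γ 0 = γ
    refine le_antisymm ?_ ?_
    · obtain ⟨b, c, δ', h, _, hg⟩ := decompR a
      refine iInf_le_of_le b (iInf_le_of_le c (iInf_le_of_le δ' (iInf_le_of_le h ?_)))
      exact sup_le hg (hzero _)
    · refine le_iInf fun b => le_iInf fun c => le_iInf fun β' => le_iInf fun h => ?_
      calc γ a = γ (mul b β' c) := by rw [← h]
        _ ≤ γ b := (hI.2 b c β').2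
        _ ≤ γ b ⊔ (0:I) := le_sup_left
end

section
/- Let S be an intra-regular Γ-AG**-groupoid and A=(μ_A,γ_A) an IFS of S. Then A is an intuitionistic fuzzy Γ-quasi ideal of S if and only if (A∘_Γδ)∩(δ∘_ΓA)=A, where δ=(S_δ,Θ_δ) with S_δ≡1 and Θ_δ≡0. -/
open unitInterval

/-- In an intra-regular Γ-AG**-groupoid, every element `a` factors as
`a = q γ a` and as `a = a γ t`. -/
lemma intra_decomp {S G : Type*} (mul : S → G → S → S) (hinv : GammaLeftInvertive mul)
    (hss : GammaStarStar mul) (hir : IntraRegular mul) (a : S) :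
    (∃ (q : S) (γ' : G), a = mul q γ' a) ∧ (∃ (t : S) (γ' : G), a = mul a γ' t) := by
  obtain ⟨x, y, α, β, γ, ha⟩ := hir a
  set q : S := mul y α (mul x β a) with hqdef
  have claim1 : a = mul q γ a := by
    calc a = mul (mul x α (mul a β a)) γ y := ha
    _ = mul (mul a α (mul x β a)) γ y := by rw [hss x a a α β]
    _ = mul (mul y α (mul x β a)) γ a := hinv a (mul x β a) y α γ
  refine ⟨⟨q, γ, claim1⟩, ?_⟩
  have h2 : mul a β a = mul (mul a γ a) β q := by
    have : mul a β a = mul (mul q γ a) β a := by rw [← claim1]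
    rw [this]; exact hinv q a a γ β
  set w : S := mul x β q with hwdef
  refine ⟨mul (mul y α w) γ a, γ, ?_⟩
  calc a = mul (mul x α (mul a β a)) γ y := ha
  _ = mul (mul x α (mul (mul a γ a) β q)) γ y := by rw [h2]
  _ = mul (mul (mul a γ a) α (mul x β q)) γ y := by rw [hss x (mul a γ a) q α β]
  _ = mul (mul y α w) γ (mul a γ a) := hinv (mul a γ a) w y α γ
  _ = mul a γ (mul (mul y α w) γ a) := hss (mul y α w) a a γ γ

theorem fuzzy_quasi_ideal_iff {S G : Type*} [Nonempty S] [Nonempty G]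
    (mul : S → G → S → S) (hinv : GammaLeftInvertive mul)
    (hss : GammaStarStar mul) (hir : IntraRegular mul)
    (μ γ : S → I) (hIFS : IsIFS μ γ) :
    FuzzyQuasiIdeal mul μ γ ↔
      ((fun a => gammaSupProd mul μ (fun _ => 1) a ⊓ gammaSupProd mul (fun _ => 1) μ a) = μ ∧
       (fun a => gammaInfProd mul γ (fun _ => 0) a ⊔ gammaInfProd mul (fun _ => 0) γ a) = γ) := by
  constructor
  · rintro ⟨hμ, hγ⟩
    constructor
    · funext a
      obtain ⟨⟨q, γq, hq⟩, ⟨t, γt, ht⟩⟩ := intra_decomp mul hinv hss hir a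
      refine le_antisymm (hμ a) (le_inf ?_ ?_)
      · have h1 : μ a ⊓ (fun _ : S => (1 : I)) t ≤ gammaSupProd mul μ (fun _ => 1) a :=
          le_iSup_of_le a (le_iSup_of_le t (le_iSup_of_le γt (le_iSup_of_le ht le_rfl)))
        calc μ a = μ a ⊓ (1 : I) := (inf_eq_left.mpr le_one').symm
        _ ≤ _ := h1
      · have h1 : (fun _ : S => (1 : I)) q ⊓ μ a ≤ gammaSupProd mul (fun _ => 1) μ a :=
          le_iSup_of_le q (le_iSup_of_le a (le_iSup_of_le γq (le_iSup_of_le hq le_rfl)))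
        calc μ a = (1 : I) ⊓ μ a := (inf_eq_right.mpr le_one').symm
        _ ≤ _ := h1
    · funext a
      obtain ⟨⟨q, γq, hq⟩, ⟨t, γt, ht⟩⟩ := intra_decomp mul hinv hss hir a
      refine le_antisymm (sup_le ?_ ?_) (hγ a)
      · have h1 : gammaInfProd mul γ (fun _ => 0) a ≤ γ a ⊔ (fun _ : S => (0 : I)) t :=
          iInf_le_of_le a (iInf_le_of_le t (iInf_le_of_le γt (iInf_le_of_le ht le_rfl)))
        calc gammaInfProd mul γ (fun _ => 0) a ≤ γ a ⊔ (0 : I) := h1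
        _ = γ a := sup_eq_left.mpr nonneg'
      · have h1 : gammaInfProd mul (fun _ => 0) γ a ≤ (fun _ : S => (0 : I)) q ⊔ γ a :=
          iInf_le_of_le q (iInf_le_of_le a (iInf_le_of_le γq (iInf_le_of_le hq le_rfl)))
        calc gammaInfProd mul (fun _ => 0) γ a ≤ (0 : I) ⊔ γ a := h1
        _ = γ a := sup_eq_right.mpr nonneg'
  · rintro ⟨h1, h2⟩
    exact ⟨fun a => (congrFun h1 a).le, fun a => (congrFun h2 a).ge⟩
end

section
/- Let S be an intra-regular Γ-AG**-groupoid and A=(μ_A,γ_A) an IFS of S. Then A is an intuitionistic fuzzy Γ-two-sided ideal of S if and only if A is an intuitionistic fuzzy Γ-quasi ideal of S. -/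
open unitInterval

lemma decomp_aux' {S G : Type*} (mul : S → G → S → S) (hinv : GammaLeftInvertive mul)
    (hss : GammaStarStar mul) (hir : IntraRegular mul) (x y : S) (α : G) :
    ∃ (w v : S) (α' δ β'' : G),
      mul x α y = mul (mul y α' w) δ (mul x β'' v) := by
  obtain ⟨u, v, α', β', γ', ha⟩ := hir (mul x α y)
  set a := mul x α y with hadef
  refine ⟨mul u β' a, v, α', γ', α, ?_⟩
  calc a = mul (mul u α' (mul a β' a)) γ' v := ha
    _ = mul (mul a α' (mul u β' a)) γ' v := by rw [hss u a a α' β']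
    _ = mul (mul v α' (mul u β' a)) γ' a := hinv a (mul u β' a) v α' γ'
    _ = mul x γ' (mul (mul v α' (mul u β' a)) α y) := hss _ x y γ' α
    _ = mul x γ' (mul (mul y α' (mul u β' a)) α v) := by rw [hinv v (mul u β' a) y α' α]
    _ = mul (mul y α' (mul u β' a)) γ' (mul x α v) := hss _ _ _ _ _

lemma decomp_right' {S G : Type*} (mul : S → G → S → S) (hinv : GammaLeftInvertive mul)
    (hss : GammaStarStar mul) (hir : IntraRegular mul) (x y : S) (α : G) :
    ∃ (s : S) (δ : G), mul x α y = mul s δ x := by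
  obtain ⟨u, v, α', β', γ', ha⟩ := hir (mul x α y)
  set a := mul x α y with hadef
  refine ⟨mul (mul x α v) α' (mul y β' (mul u α y)), γ', ?_⟩
  calc a = mul (mul u α' (mul a β' a)) γ' v := ha
    _ = mul (mul a α' (mul u β' a)) γ' v := by rw [hss u a a α' β']
    _ = mul (mul v α' (mul u β' a)) γ' a := hinv a (mul u β' a) v α' γ'
    _ = mul x γ' (mul (mul v α' (mul u β' a)) α y) := hss _ x y γ' α
    _ = mul x γ' (mul (mul y α' (mul u β' a)) α v) := by rw [hinv v (mul u β' a) y α' α]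
    _ = mul (mul y α' (mul u β' a)) γ' (mul x α v) := hss _ _ _ _ _
    _ = mul (mul y α' (mul x β' (mul u α y))) γ' (mul x α v) := by
          rw [hadef, hss u x y β' α]
    _ = mul (mul x α' (mul y β' (mul u α y))) γ' (mul x α v) := by
          rw [hss y x (mul u α y) α' β']
    _ = mul (mul (mul x α v) α' (mul y β' (mul u α y))) γ' x := hinv x _ _ α' γ'

lemma I_le_one' (x : I) : x ≤ (1 : I) := x.2.2
lemma I_zero_le' (x : I) : (0 : I) ≤ x := x.2.1


theorem fuzzy_two_sided_iff_quasi {S G : Type*} [Nonempty S] [Nonempty G]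
    (mul : S → G → S → S) (hinv : GammaLeftInvertive mul)
    (hss : GammaStarStar mul) (hir : IntraRegular mul)
    (μ γ : S → I) (hIFS : IsIFS μ γ) :
    FuzzyTwoSidedIdeal mul μ γ ↔ FuzzyQuasiIdeal mul μ γ := by
  constructor
  · rintro ⟨hl, hr⟩
    constructor
    · intro a
      refine inf_le_left.trans ?_
      refine iSup_le fun b => iSup_le fun c => iSup_le fun β => iSup_le fun h => ?_
      calc μ b ⊓ 1 ≤ μ b := inf_le_left
        _ ≤ μ (mul b β c) := (hr b c β).1
        _ = μ a := by rw [h]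
    · intro a
      refine le_trans ?_ le_sup_left
      refine le_iInf fun b => le_iInf fun c => le_iInf fun β => le_iInf fun h => ?_
      calc γ a = γ (mul b β c) := by rw [h]
        _ ≤ γ b := (hr b c β).2
        _ ≤ γ b ⊔ 0 := le_sup_left
  · intro hq
    have hright : FuzzyRightIdeal mul μ γ := by
      intro x y α
      obtain ⟨s, δ, hd⟩ := decomp_right' mul hinv hss hir x y α
      constructor
      · refine le_trans (le_inf ?_ ?_) (hq.1 (mul x α y))
        · exact le_iSup_of_le x (le_iSup_of_le y (le_iSup_of_le α
            (le_iSup_of_le rfl (le_inf le_rfl (I_le_one' _)))))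
        · exact le_iSup_of_le s (le_iSup_of_le x (le_iSup_of_le δ
            (le_iSup_of_le hd (le_inf (I_le_one' _) le_rfl))))
      · refine le_trans (hq.2 (mul x α y)) (sup_le ?_ ?_)
        · exact iInf_le_of_le x (iInf_le_of_le y (iInf_le_of_le α
            (iInf_le_of_le rfl (sup_le le_rfl (I_zero_le' _)))))
        · exact iInf_le_of_le s (iInf_le_of_le x (iInf_le_of_le δ
            (iInf_le_of_le hd (sup_le (I_zero_le' _) le_rfl))))
    have hleft : FuzzyLeftIdeal mul μ γ := by
      intro x y α
      obtain ⟨w, v, α', δ, β'', hd⟩ := decomp_aux' mul hinv hss hir x y α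
      constructor
      · calc μ y ≤ μ (mul y α' w) := (hright y w α').1
          _ ≤ μ (mul (mul y α' w) δ (mul x β'' v)) := (hright _ _ δ).1
          _ = μ (mul x α y) := by rw [← hd]
      · calc γ (mul x α y) = γ (mul (mul y α' w) δ (mul x β'' v)) := by rw [← hd]
          _ ≤ γ (mul y α' w) := (hright _ _ δ).2
          _ ≤ γ y := (hright y w α').2
    exact ⟨hleft, hright⟩
end

section
/- Let S be an intra-regular Γ-AG**-groupoid and A=(μ_A,γ_A) an IFS of S. Then A is an intuitionistic fuzzy Γ-two-sided ideal of S if and only if A is an intuitionistic fuzzy Γ-interior ideal of S. -/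
open unitInterval

theorem fuzzy_two_sided_iff_interior {S G : Type*} [Nonempty S] [Nonempty G]
    (mul : S → G → S → S) (hinv : GammaLeftInvertive mul)
    (hss : GammaStarStar mul) (hir : IntraRegular mul)
    (μ γ : S → I) (hIFS : IsIFS μ γ) :
    FuzzyTwoSidedIdeal mul μ γ ↔ FuzzyInteriorIdeal mul μ γ := by
  constructor
  · rintro ⟨hl, hr⟩ x a y β δ
    exact ⟨le_trans (hl x a β).1 (hr (mul x β a) y δ).1,
           le_trans (hr (mul x β a) y δ).2 (hl x a β).2⟩
  · intro hint
    have hleft : FuzzyLeftIdeal mul μ γ := by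
      intro s a δ
      obtain ⟨x₀, y₀, α, β, g, ha⟩ := hir a
      have key : mul s δ a =
          mul (mul a β a) δ (mul (mul x₀ α s) g y₀) := by
        calc mul s δ a
            = mul s δ (mul (mul x₀ α (mul a β a)) g y₀) := by rw [← ha]
          _ = mul (mul x₀ α (mul a β a)) δ (mul s g y₀) :=
              hss s (mul x₀ α (mul a β a)) y₀ δ g
          _ = mul (mul (mul s g y₀) α (mul a β a)) δ x₀ :=
              hinv x₀ (mul a β a) (mul s g y₀) α δ
          _ = mul (mul (mul (mul a β a) g y₀) α s) δ x₀ := by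
              rw [hinv s y₀ (mul a β a) g α]
          _ = mul (mul x₀ α s) δ (mul (mul a β a) g y₀) :=
              hinv (mul (mul a β a) g y₀) s x₀ α δ
          _ = mul (mul a β a) δ (mul (mul x₀ α s) g y₀) :=
              hss (mul x₀ α s) (mul a β a) y₀ δ g
      rw [key]
      exact ⟨(hint a a (mul (mul x₀ α s) g y₀) β δ).1,
             (hint a a (mul (mul x₀ α s) g y₀) β δ).2⟩
    refine ⟨hleft, ?_⟩
    intro a s δ
    obtain ⟨x₀, y₀, α, β, g, ha⟩ := hir a
    have key : mul a δ s =
        mul a δ (mul (mul (mul x₀ α s) g y₀) β a) := by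
      calc mul a δ s
          = mul (mul (mul x₀ α (mul a β a)) g y₀) δ s := by rw [← ha]
        _ = mul (mul s g y₀) δ (mul x₀ α (mul a β a)) :=
            hinv (mul x₀ α (mul a β a)) y₀ s g δ
        _ = mul x₀ δ (mul (mul s g y₀) α (mul a β a)) :=
            hss (mul s g y₀) x₀ (mul a β a) δ α
        _ = mul x₀ δ (mul (mul (mul a β a) g y₀) α s) := by
            rw [hinv s y₀ (mul a β a) g α]
        _ = mul (mul (mul a β a) g y₀) δ (mul x₀ α s) :=
            hss x₀ (mul (mul a β a) g y₀) s δ α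
        _ = mul (mul (mul x₀ α s) g y₀) δ (mul a β a) :=
            hinv (mul a β a) y₀ (mul x₀ α s) g δ
        _ = mul a δ (mul (mul (mul x₀ α s) g y₀) β a) :=
            hss (mul (mul x₀ α s) g y₀) a a δ β
    rw [key]
    set T := mul (mul x₀ α s) g y₀
    exact ⟨le_trans (hleft T a β).1 (hleft a (mul T β a) δ).1,
           le_trans (hleft a (mul T β a) δ).2 (hleft T a β).2⟩
end

section
/- Let S be an intra-regular Γ-AG**-groupoid and A=(μ_A,γ_A) an IFS of S. Then the following are equivalent: (i) A is an intuitionistic fuzzy Γ-left ideal of S; (ii) A is an intuitionistic fuzzy Γ-right ideal of S; (iii) A is an intuitionistic fuzzy Γ-two-sided ideal of S; (iv) A is an intuitionistic fuzzy Γ-bi-ideal of S; (v) A is an intuitionistic fuzzy Γ-generalized bi-ideal of S; (vi) A is an intuitionistic fuzzy Γ-interior ideal of S; (vii) A is an intuitionistic fuzzy Γ-quasi ideal of S; (viii) A∘_Γδ=A and δ∘_ΓA=A, where δ=(S_δ,Θ_δ) with S_δ≡1 and Θ_δ≡0. -/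
open unitInterval

theorem fuzzy_ideals_tfae {S G : Type*} [Nonempty S] [Nonempty G]
    (mul : S → G → S → S) (hinv : GammaLeftInvertive mul)
    (hss : GammaStarStar mul) (hir : IntraRegular mul)
    (μ γ : S → I) (hIFS : IsIFS μ γ) :
    List.TFAE
      [FuzzyLeftIdeal mul μ γ,
       FuzzyRightIdeal mul μ γ,
       FuzzyTwoSidedIdeal mul μ γ,
       FuzzyBiIdeal mul μ γ,
       FuzzyGenBiIdeal mul μ γ,
       FuzzyInteriorIdeal mul μ γ,
       FuzzyQuasiIdeal mul μ γ,
       (gammaSupProd mul μ (fun _ => 1) = μ ∧ gammaInfProd mul γ (fun _ => 0) = γ ∧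
        gammaSupProd mul (fun _ => 1) μ = μ ∧ gammaInfProd mul (fun _ => 0) γ = γ)] := by
  -- medial law
  have hmed : ∀ (a b c d : S) (p q r : G),
      mul (mul a p b) q (mul c r d) = mul (mul a p c) q (mul b r d) := by
    intro a b c d p q r
    calc mul (mul a p b) q (mul c r d) = mul (mul (mul c r d) p b) q a := hinv a b _ p q
      _ = mul (mul (mul b r d) p c) q a := by rw [hinv c d b r p]
      _ = mul (mul a p c) q (mul b r d) := hinv (mul b r d) c a p q
  -- paramedial law
  have hpara : ∀ (a b c d : S) (p q r : G),
      mul (mul a p b) q (mul c r d) = mul (mul d p b) q (mul c r a) := by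
    intro a b c d p q r
    calc mul (mul a p b) q (mul c r d) = mul c q (mul (mul a p b) r d) := hss _ c d q r
      _ = mul c q (mul (mul d p b) r a) := by rw [hinv a b d p r]
      _ = mul (mul d p b) q (mul c r a) := hss c _ a q r
  have h12 : FuzzyLeftIdeal mul μ γ → FuzzyRightIdeal mul μ γ := by
    intro hL x y α
    obtain ⟨u, v, a₁, b₁, c₁, hx⟩ := hir x
    have key : mul x α y = mul (mul y c₁ v) α (mul u a₁ (mul x b₁ x)) := by
      conv_lhs => rw [hx]
      exact hinv (mul u a₁ (mul x b₁ x)) v y c₁ α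
    rw [key]
    constructor
    · exact le_trans (le_trans (hL x x b₁).1 (hL u _ a₁).1) (hL _ _ α).1
    · exact le_trans (hL _ _ α).2 (le_trans (hL u _ a₁).2 (hL x x b₁).2)
  have h21 : FuzzyRightIdeal mul μ γ → FuzzyLeftIdeal mul μ γ := by
    intro hR x y α
    obtain ⟨u, v, a₁, b₁, c₁, hy⟩ := hir y
    have key : mul x α y = mul (mul y a₁ (mul u b₁ y)) α (mul x c₁ v) := by
      conv_lhs => rw [hy]
      rw [hss x (mul u a₁ (mul y b₁ y)) v α c₁, hss u y y a₁ b₁]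
    rw [key]
    constructor
    · exact le_trans (hR y _ a₁).1 (hR _ _ α).1
    · exact le_trans (hR _ _ α).2 (hR y _ a₁).2
  have h13 : FuzzyLeftIdeal mul μ γ → FuzzyTwoSidedIdeal mul μ γ := fun hL => ⟨hL, h12 hL⟩
  have h34 : FuzzyTwoSidedIdeal mul μ γ → FuzzyBiIdeal mul μ γ := by
    rintro ⟨hL, hR⟩
    refine ⟨fun x y α => ⟨le_trans inf_le_left (hR x y α).1,
      le_trans (hR x y α).2 le_sup_left⟩, fun x a y β δ => ⟨?_, ?_⟩⟩
    · exact le_trans inf_le_left (le_trans (hR x a β).1 (hR _ y δ).1)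
    · exact le_trans (hR _ y δ).2 (le_trans (hR x a β).2 le_sup_left)
  have h36 : FuzzyTwoSidedIdeal mul μ γ → FuzzyInteriorIdeal mul μ γ := by
    rintro ⟨hL, hR⟩ x a y β δ
    exact ⟨le_trans (hL x a β).1 (hR _ y δ).1, le_trans (hR _ y δ).2 (hL x a β).2⟩
  have h61 : FuzzyInteriorIdeal mul μ γ → FuzzyLeftIdeal mul μ γ := by
    intro hI x y α
    obtain ⟨u, v, a₁, b₁, c₁, hy⟩ := hir y
    have key : mul x α y = mul (mul (mul (mul u a₁ x) c₁ v) b₁ y) α y := by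
      conv_lhs => rw [hy]
      rw [hss x (mul u a₁ (mul y b₁ y)) v α c₁, hmed u (mul y b₁ y) x v a₁ α c₁,
        hss (mul u a₁ x) (mul y b₁ y) v α c₁, hinv y y (mul (mul u a₁ x) c₁ v) b₁ α]
    rw [key]
    exact ⟨(hI _ y y b₁ α).1, (hI _ y y b₁ α).2⟩
  have h51 : FuzzyGenBiIdeal mul μ γ → FuzzyLeftIdeal mul μ γ := by
    intro hg x y α
    obtain ⟨u, v, a₁, b₁, c₁, hy⟩ := hir y
    have key : mul x α y = mul (mul y a₁
        (mul (mul (mul (mul x c₁ v) b₁ (mul u c₁ v)) a₁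
          (mul u b₁ (mul u a₁ (mul y b₁ y)))) c₁ v)) α y := by
      calc mul x α y
          = mul x α (mul (mul u a₁ (mul y b₁ y)) c₁ v) := by conv_lhs => rw [hy]
        _ = mul (mul u a₁ (mul y b₁ y)) α (mul x c₁ v) :=
            hss x (mul u a₁ (mul y b₁ y)) v α c₁
        _ = mul (mul y a₁ (mul u b₁ y)) α (mul x c₁ v) := by rw [hss u y y a₁ b₁]
        _ = mul (mul (mul x c₁ v) a₁ (mul u b₁ y)) α y :=
            hinv y (mul u b₁ y) (mul x c₁ v) a₁ α
        _ = mul (mul (mul x c₁ v) a₁ (mul u b₁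
              (mul (mul u a₁ (mul y b₁ y)) c₁ v))) α y :=
            congrArg (fun t => mul (mul (mul x c₁ v) a₁ (mul u b₁ t)) α y) hy
        _ = mul (mul (mul x c₁ v) a₁ (mul (mul u a₁ (mul y b₁ y)) b₁
              (mul u c₁ v))) α y := by
            rw [hss u (mul u a₁ (mul y b₁ y)) v b₁ c₁]
        _ = mul (mul (mul u a₁ (mul y b₁ y)) a₁ (mul (mul x c₁ v) b₁
              (mul u c₁ v))) α y := by
            rw [hss (mul x c₁ v) (mul u a₁ (mul y b₁ y)) (mul u c₁ v) a₁ b₁]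
        _ = mul (mul (mul u a₁ (mul (mul (mul u a₁ (mul y b₁ y)) c₁ v) b₁ y)) a₁
              (mul (mul x c₁ v) b₁ (mul u c₁ v))) α y :=
            congrArg (fun t => mul (mul (mul u a₁ (mul t b₁ y)) a₁
              (mul (mul x c₁ v) b₁ (mul u c₁ v))) α y) hy
        _ = mul (mul (mul u a₁ (mul (mul y c₁ v) b₁ (mul u a₁ (mul y b₁ y)))) a₁
              (mul (mul x c₁ v) b₁ (mul u c₁ v))) α y := by
            rw [hinv (mul u a₁ (mul y b₁ y)) v y c₁ b₁]
        _ = mul (mul (mul (mul y c₁ v) a₁ (mul u b₁ (mul u a₁ (mul y b₁ y)))) a₁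
              (mul (mul x c₁ v) b₁ (mul u c₁ v))) α y := by
            rw [hss u (mul y c₁ v) (mul u a₁ (mul y b₁ y)) a₁ b₁]
        _ = mul (mul (mul (mul (mul x c₁ v) b₁ (mul u c₁ v)) a₁
              (mul u b₁ (mul u a₁ (mul y b₁ y)))) a₁ (mul y c₁ v)) α y := by
            rw [hinv (mul y c₁ v) (mul u b₁ (mul u a₁ (mul y b₁ y)))
              (mul (mul x c₁ v) b₁ (mul u c₁ v)) a₁ a₁]
        _ = mul (mul y a₁ (mul (mul (mul (mul x c₁ v) b₁ (mul u c₁ v)) a₁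
              (mul u b₁ (mul u a₁ (mul y b₁ y)))) c₁ v)) α y := by
            rw [hss (mul (mul (mul x c₁ v) b₁ (mul u c₁ v)) a₁
              (mul u b₁ (mul u a₁ (mul y b₁ y)))) y v a₁ c₁]
    rw [key]
    constructor
    · exact le_trans (le_inf le_rfl le_rfl) (hg y _ y a₁ α).1
    · exact le_trans (hg y _ y a₁ α).2 (sup_le le_rfl le_rfl)
  have h38 : FuzzyTwoSidedIdeal mul μ γ →
      (gammaSupProd mul μ (fun _ => 1) = μ ∧ gammaInfProd mul γ (fun _ => 0) = γ ∧
        gammaSupProd mul (fun _ => 1) μ = μ ∧ gammaInfProd mul (fun _ => 0) γ = γ) := by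
    rintro ⟨hL, hR⟩
    have hrep : ∀ a : S, ∃ (b c : S) (p : G),
        a = mul b p c ∧ μ a ≤ μ b ∧ γ b ≤ γ a := by
      intro a
      obtain ⟨u, v, a₁, b₁, c₁, ha⟩ := hir a
      exact ⟨mul u a₁ (mul a b₁ a), v, c₁, ha,
        le_trans (hL a a b₁).1 (hL u _ a₁).1,
        le_trans (hL u _ a₁).2 (hL a a b₁).2⟩
    have hrep' : ∀ a : S, ∃ (b c : S) (p : G),
        a = mul b p c ∧ μ a ≤ μ c ∧ γ c ≤ γ a := by
      intro a
      obtain ⟨u, v, a₁, b₁, c₁, ha⟩ := hir a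
      refine ⟨mul v a₁ (mul u b₁ a), a, c₁, ?_, le_rfl, le_rfl⟩
      conv_lhs => rw [ha]
      rw [hss u a a a₁ b₁, hinv a (mul u b₁ a) v a₁ c₁]
    refine ⟨funext fun a => ?_, funext fun a => ?_, funext fun a => ?_, funext fun a => ?_⟩
    · obtain ⟨b, c, p, hd, hμ, -⟩ := hrep a
      refine le_antisymm (iSup_le fun b' => iSup_le fun c' => iSup_le fun p' =>
        iSup_le fun h => le_trans inf_le_left ?_) ?_
      · rw [h]; exact (hR b' c' p').1
      · exact le_iSup_of_le b <| le_iSup_of_le c <| le_iSup_of_le p <|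
          le_iSup_of_le hd <| le_inf hμ le_one'
    · obtain ⟨b, c, p, hd, -, hγ⟩ := hrep a
      refine le_antisymm ?_ (le_iInf fun b' => le_iInf fun c' => le_iInf fun p' =>
        le_iInf fun h => le_trans ?_ le_sup_left)
      · exact iInf_le_of_le b <| iInf_le_of_le c <| iInf_le_of_le p <|
          iInf_le_of_le hd <| sup_le hγ nonneg'
      · rw [h]; exact (hR b' c' p').2
    · obtain ⟨b, c, p, hd, hμ, -⟩ := hrep' a
      refine le_antisymm (iSup_le fun b' => iSup_le fun c' => iSup_le fun p' =>
        iSup_le fun h => le_trans inf_le_right ?_) ?_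
      · rw [h]; exact (hL b' c' p').1
      · exact le_iSup_of_le b <| le_iSup_of_le c <| le_iSup_of_le p <|
          le_iSup_of_le hd <| le_inf le_one' hμ
    · obtain ⟨b, c, p, hd, -, hγ⟩ := hrep' a
      refine le_antisymm ?_ (le_iInf fun b' => le_iInf fun c' => le_iInf fun p' =>
        le_iInf fun h => le_trans ?_ le_sup_right)
      · exact iInf_le_of_le b <| iInf_le_of_le c <| iInf_le_of_le p <|
          iInf_le_of_le hd <| sup_le nonneg' hγ
      · rw [h]; exact (hL b' c' p').2
  have h87 : (gammaSupProd mul μ (fun _ => 1) = μ ∧ gammaInfProd mul γ (fun _ => 0) = γ ∧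
        gammaSupProd mul (fun _ => 1) μ = μ ∧ gammaInfProd mul (fun _ => 0) γ = γ) →
      FuzzyQuasiIdeal mul μ γ := by
    rintro ⟨h1, h2, h3, h4⟩
    exact ⟨fun a => by rw [h1]; exact inf_le_left, fun a => by rw [h2]; exact le_sup_left⟩
  have h71 : FuzzyQuasiIdeal mul μ γ → FuzzyLeftIdeal mul μ γ := by
    intro hq x y α
    obtain ⟨u, v, a₁, b₁, c₁, hb⟩ := hir (mul x α y)
    have key : mul x α y = mul y c₁
        (mul (mul v a₁ (mul u b₁ (mul x α x))) α y) := by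
      conv_lhs => rw [hb]
      rw [hpara x y x y α b₁ α, hss u (mul y α y) (mul x α x) a₁ b₁,
        hinv (mul y α y) (mul u b₁ (mul x α x)) v a₁ c₁,
        hss (mul v a₁ (mul u b₁ (mul x α x))) y y c₁ α]
    constructor
    · refine le_trans (le_inf ?_ ?_) (hq.1 (mul x α y))
      · exact le_iSup_of_le y <| le_iSup_of_le _ <| le_iSup_of_le c₁ <|
          le_iSup_of_le key <| le_inf le_rfl le_one'
      · exact le_iSup_of_le x <| le_iSup_of_le y <| le_iSup_of_le α <|
          le_iSup_of_le rfl <| le_inf le_one' le_rfl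
    · refine le_trans (hq.2 (mul x α y)) (sup_le ?_ ?_)
      · exact le_trans (iInf_le_of_le y <| iInf_le_of_le _ <| iInf_le_of_le c₁ <|
          iInf_le_of_le key le_rfl) (sup_le le_rfl nonneg')
      · exact le_trans (iInf_le_of_le x <| iInf_le_of_le y <| iInf_le_of_le α <|
          iInf_le_of_le rfl le_rfl) (sup_le nonneg' le_rfl)
  tfae_have 1 → 2 := h12
  tfae_have 2 → 1 := h21
  tfae_have 1 → 3 := h13
  tfae_have 3 → 1 := fun h => h.1
  tfae_have 3 → 4 := h34
  tfae_have 4 → 5 := fun h => h.2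
  tfae_have 5 → 1 := h51
  tfae_have 3 → 6 := h36
  tfae_have 6 → 1 := h61
  tfae_have 3 → 8 := h38
  tfae_have 8 → 7 := h87
  tfae_have 7 → 1 := h71
  tfae_finish
end

section
/- Let S be an intra-regular Γ-AG**-groupoid and let A=(μ_A,γ_A) and B=(μ_B,γ_B) be intuitionistic fuzzy Γ-two-sided ideals of S. Then A∘_ΓB=A∩B, i.e., (μ_A∘_Γμ_B)(a)=min(μ_A(a),μ_B(a)) and (γ_A∘_Γγ_B)(a)=max(γ_A(a),γ_B(a)) for every a∈S. -/
open unitInterval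

theorem prod_of_two_sided_ideals_eq_inter {S G : Type*} [Nonempty S] [Nonempty G]
    (mul : S → G → S → S) (hinv : GammaLeftInvertive mul)
    (hss : GammaStarStar mul) (hir : IntraRegular mul)
    (μA γA μB γB : S → I) (hA : IsIFS μA γA) (hB : IsIFS μB γB)
    (hIA : FuzzyTwoSidedIdeal mul μA γA) (hIB : FuzzyTwoSidedIdeal mul μB γB) :
    ∀ a : S,
      gammaSupProd mul μA μB a = μA a ⊓ μB a ∧
      gammaInfProd mul γA γB a = γA a ⊔ γB a := by
  obtain ⟨hAL, hAR⟩ := hIA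
  obtain ⟨hBL, hBR⟩ := hIB
  intro a
  obtain ⟨x, y, α, β, γ, ha⟩ := hir a
  have key : a = mul (mul y α (mul x β a)) γ a := by
    calc a = mul (mul x α (mul a β a)) γ y := ha
    _ = mul (mul a α (mul x β a)) γ y := by rw [hss x a a α β]
    _ = mul (mul y α (mul x β a)) γ a := hinv a (mul x β a) y α γ
  constructor
  · apply le_antisymm
    · refine iSup_le fun b => iSup_le fun c => iSup_le fun δ => iSup_le fun h => ?_
      rw [h]
      exact inf_le_inf ((hAR b c δ).1) ((hBL b c δ).1)
    · have h1 : μA a ≤ μA (mul y α (mul x β a)) :=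
        le_trans (hAL x a β).1 (hAL y (mul x β a) α).1
      refine le_trans (inf_le_inf h1 (le_refl (μB a))) ?_
      exact le_iSup_of_le (mul y α (mul x β a)) (le_iSup_of_le a
        (le_iSup_of_le γ (le_iSup_of_le key (le_refl _))))
  · apply le_antisymm
    · have h1 : γA (mul y α (mul x β a)) ≤ γA a :=
        le_trans (hAL y (mul x β a) α).2 (hAL x a β).2
      refine le_trans ?_ (sup_le_sup h1 (le_refl (γB a)))
      exact iInf_le_of_le (mul y α (mul x β a)) (iInf_le_of_le a
        (iInf_le_of_le γ (iInf_le_of_le key (le_refl _))))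
    · refine le_iInf fun b => le_iInf fun c => le_iInf fun δ => le_iInf fun h => ?_
      rw [h]
      exact sup_le_sup ((hAR b c δ).2) ((hBL b c δ).2)
end

section
/- Let S be an intra-regular Γ-AG-groupoid. Then every intuitionistic fuzzy Γ-two-sided ideal A=(μ_A,γ_A) of S is Γ-idempotent, i.e., μ_A∘_Γμ_A=μ_A and γ_A∘_Γγ_A=γ_A. -/
open unitInterval

theorem two_sided_ideal_idempotent {S G : Type*} [Nonempty S] [Nonempty G]
    (mul : S → G → S → S) (hinv : GammaLeftInvertive mul) (hir : IntraRegular mul)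
    (μ γ : S → I) (hIFS : IsIFS μ γ) (hI : FuzzyTwoSidedIdeal mul μ γ) :
    gammaSupProd mul μ μ = μ ∧ gammaInfProd mul γ γ = γ := by
  obtain ⟨hL, hR⟩ := hI
  have key : ∀ a : S, ∃ (b c : S) (δ : G), a = mul b δ c ∧
      μ a ≤ μ b ∧ μ a ≤ μ c ∧ γ b ≤ γ a ∧ γ c ≤ γ a := by
    intro a
    obtain ⟨x, y, α, β, γ', hx⟩ := hir a
    obtain ⟨u, v, α₁, β₁, γ₁, hu⟩ := hir x
    set N := mul u α₁ (mul x β₁ x) with hN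
    refine ⟨mul y α (mul v β a), mul N γ₁ a, γ', ?_, ?_, ?_, ?_, ?_⟩
    · conv_lhs => rw [hx]
      conv_lhs => rw [hu]
      rw [hinv N v (mul a β a) γ₁ α, hinv a a v β γ₁,
        hinv (mul v β a) a N γ₁ α, hinv (mul N γ₁ a) (mul v β a) y α γ']
    · exact le_trans (hL v a β).1 (hL y (mul v β a) α).1
    · exact (hL N a γ₁).1
    · exact le_trans (hL y (mul v β a) α).2 (hL v a β).2
    · exact (hL N a γ₁).2
  constructor
  · funext a
    apply le_antisymm
    · refine iSup_le fun b => iSup_le fun c => iSup_le fun δ => iSup_le fun h => ?_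
      calc μ b ⊓ μ c ≤ μ b := inf_le_left
        _ ≤ μ (mul b δ c) := (hR b c δ).1
        _ = μ a := by rw [← h]
    · obtain ⟨b, c, δ, hd, h1, h2, _, _⟩ := key a
      exact le_iSup_of_le b (le_iSup_of_le c (le_iSup_of_le δ
        (le_iSup_of_le hd (le_inf h1 h2))))
  · funext a
    apply le_antisymm
    · obtain ⟨b, c, δ, hd, _, _, h3, h4⟩ := key a
      exact iInf_le_of_le b (iInf_le_of_le c (iInf_le_of_le δ
        (iInf_le_of_le hd (sup_le h3 h4))))
    · refine le_iInf fun b => le_iInf fun c => le_iInf fun δ => le_iInf fun h => ?_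
      calc γ a = γ (mul b δ c) := by rw [← h]
        _ ≤ γ b := (hR b c δ).2
        _ ≤ γ b ⊔ γ c := le_sup_left
end
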